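/- arXiv:1008.1810 — 3 statements merged into one kernel-verified Lean document; each statement's English description precedes it below -/
import Mathlib

section
/- For the domain wall solution f(x) = b·tanh(√(-λ) b x) with λ < 0, the stress-energy components are T_{tt} = λ b^4 tanh^2(√(-λ)bx) sech^2(√(-λ)bx), T_{xx} = 0, and T_{yy} = T_{zz} = λ b^4 sech^4(√(-λ)bx), and the integrals σ = ∫_{-∞}^{∞} T_{tt} dx = -(2/3)√(-λ) b^3 and τ = -∫_{-∞}^{∞} T_{yy} dx = (4/3)√(-λ) b^3 hold; in particular σ - 2τ < 0. -/
/-! Both integrands are derivatives of polynomials in `tanh`: `tanh² sech² = (tanh³ / 3)'` and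
`sech⁴ = (1 - tanh²) sech² = (tanh - tanh³ / 3)'`. They are even, and `tanh → 1` at `+∞`, so the
integrals over the line are `2/3` and `4/3`. The substitution `u = √(-λ) b x` divides them by
`√(-λ) b`, which turns the prefactor `λ b⁴` into `-√(-λ) b³`. -/

open MeasureTheory Real Filter Set Topology

namespace Real

theorem tanh_eq_one_sub_exp_div (x : ℝ) :
    tanh x = (1 - exp (-(2 * x))) / (1 + exp (-(2 * x))) := by
  have h : exp (-(2 * x)) = (exp x ^ 2)⁻¹ := by rw [exp_neg, two_mul, exp_add]; ring
  rw [tanh_eq, exp_neg, h]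
  field_simp

theorem tendsto_tanh_atTop : Tendsto tanh atTop (𝓝 1) := by
  have hexp : Tendsto (fun x : ℝ => exp (-(2 * x))) atTop (𝓝 0) :=
    tendsto_exp_neg_atTop_nhds_zero.comp (tendsto_id.const_mul_atTop two_pos)
  have h := (tendsto_const_nhds (x := (1 : ℝ)).sub hexp).div
    (tendsto_const_nhds (x := (1 : ℝ)).add hexp) (by norm_num)
  rw [sub_zero, add_zero, div_one] at h
  exact h.congr fun x => (tanh_eq_one_sub_exp_div x).symm

theorem hasDerivAt_tanh (x : ℝ) : HasDerivAt tanh ((1 / cosh x) ^ 2) x := by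
  have h := (hasDerivAt_sinh x).div (hasDerivAt_cosh x) (cosh_pos x).ne'
  refine (h.congr_deriv ?_).congr_of_eventuallyEq (.of_forall tanh_eq_sinh_div_cosh)
  field_simp
  linarith [cosh_sq_sub_sinh_sq x]

theorem one_sub_tanh_sq (x : ℝ) : 1 - tanh x ^ 2 = (1 / cosh x) ^ 2 := by
  rw [tanh_eq_sinh_div_cosh]
  field_simp
  linarith [cosh_sq_sub_sinh_sq x]

end Real

theorem integral_of_even_of_hasDerivAt_of_nonneg {F g : ℝ → ℝ} {L : ℝ}
    (heven : ∀ x, g (-x) = g x) (hderiv : ∀ x ∈ Ici (0 : ℝ), HasDerivAt F (g x) x)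
    (hg : ∀ x ∈ Ioi (0 : ℝ), 0 ≤ g x) (htop : Tendsto F atTop (𝓝 L)) :
    ∫ x, g x = 2 * (L - F 0) := by
  have habs : (fun x => g |x|) = g := by
    ext x
    rcases abs_choice x with h | h <;> simp [h, heven]
  rw [← habs, integral_comp_abs, integral_Ioi_of_hasDerivAt_of_nonneg' hderiv hg htop]

theorem integral_tanh_sq_mul_sech_sq :
    ∫ x, tanh x ^ 2 * (1 / cosh x) ^ 2 = 2 / 3 := by
  have hderiv (x : ℝ) (_ : x ∈ Ici (0 : ℝ)) :
      HasDerivAt (fun y => tanh y ^ 3 / 3) (tanh x ^ 2 * (1 / cosh x) ^ 2) x :=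
    (((hasDerivAt_tanh x).pow 3).div_const 3).congr_deriv (by ring)
  have htop : Tendsto (fun y => tanh y ^ 3 / 3) atTop (𝓝 (1 / 3)) := by
    simpa using (tendsto_tanh_atTop.pow 3).div_const 3
  rw [integral_of_even_of_hasDerivAt_of_nonneg (by simp [tanh_neg]) hderiv
    (fun x _ => by positivity) htop]
  norm_num

theorem integral_sech_pow_four : ∫ x, (1 / cosh x) ^ 4 = 4 / 3 := by
  have hderiv (x : ℝ) (_ : x ∈ Ici (0 : ℝ)) :
      HasDerivAt (fun y => tanh y - tanh y ^ 3 / 3) ((1 / cosh x) ^ 4) x := by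
    refine ((hasDerivAt_tanh x).sub (((hasDerivAt_tanh x).pow 3).div_const 3)).congr_deriv ?_
    rw [show (1 / cosh x) ^ 4 = (1 - tanh x ^ 2) * (1 / cosh x) ^ 2 by
      rw [one_sub_tanh_sq]; ring]
    ring
  have htop : Tendsto (fun y => tanh y - tanh y ^ 3 / 3) atTop (𝓝 (2 / 3)) := by
    convert tendsto_tanh_atTop.sub ((tendsto_tanh_atTop.pow 3).div_const 3) using 2
    norm_num
  rw [integral_of_even_of_hasDerivAt_of_nonneg (by simp) hderiv
    (fun x _ => by positivity) htop]
  norm_num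

theorem integral_const_mul_comp_mul_left (A : ℝ) (g : ℝ → ℝ) {c : ℝ} (hc : 0 < c) :
    ∫ x, A * g (c * x) = A / c * ∫ x, g x := by
  rw [integral_const_mul, Measure.integral_comp_mul_left, abs_of_pos (inv_pos.mpr hc),
    smul_eq_mul, div_eq_mul_inv, mul_assoc]

theorem mul_pow_four_div_sqrt_neg_mul {lam : ℝ} (hlam : lam ≤ 0) (b : ℝ) :
    lam * b ^ 4 / (√(-lam) * b) = -(√(-lam) * b ^ 3) := by
  have hsq : √(-lam) ^ 2 = -lam := sq_sqrt (neg_nonneg.mpr hlam)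
  rcases eq_or_ne (√(-lam) * b) 0 with h | h
  · rcases mul_eq_zero.mp h with hs | hb
    · simp [show lam = 0 by nlinarith]
    · simp [hb]
  · have := left_ne_zero_of_mul h
    have := right_ne_zero_of_mul h
    field_simp
    linear_combination hsq

/-- For the domain wall `f(x) = b·tanh(√(-λ)bx)` with `λ < 0`, `b > 0`,
the stress-energy components are
`T_tt = λb⁴ tanh²(√(-λ)bx) sech²(√(-λ)bx)`, `T_xx = 0`,
`T_yy = T_zz = λb⁴ sech⁴(√(-λ)bx)`, and the surface density and tension are
`σ = ∫ T_tt = -(2/3)√(-λ)b³` and `τ = -∫ T_yy = (4/3)√(-λ)b³`; in particular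
`σ - 2τ < 0`. -/
theorem stmt_10 (lam b : ℝ) (hlam : lam < 0) (hb : 0 < b) :
    let k : ℝ := Real.sqrt (-lam) * b
    let Ttt : ℝ → ℝ := fun x =>
      lam * b ^ 4 * (Real.tanh (k * x)) ^ 2 * (1 / Real.cosh (k * x)) ^ 2
    let Txx : ℝ → ℝ := fun _ => 0
    let Tyy : ℝ → ℝ := fun x => lam * b ^ 4 * (1 / Real.cosh (k * x)) ^ 4
    let Tzz : ℝ → ℝ := Tyy
    let σ : ℝ := ∫ x : ℝ, Ttt x
    let τ : ℝ := -∫ x : ℝ, Tyy x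
    (∀ x, Txx x = 0) ∧ (∀ x, Tzz x = Tyy x) ∧
    σ = -(2 / 3) * Real.sqrt (-lam) * b ^ 3 ∧
    τ = (4 / 3) * Real.sqrt (-lam) * b ^ 3 ∧
    σ - 2 * τ < 0 := by
  intro k Ttt Txx Tyy Tzz σ τ
  have hs : 0 < √(-lam) := sqrt_pos.mpr (neg_pos.mpr hlam)
  have hk : 0 < k := mul_pos hs hb
  have hscale := mul_pow_four_div_sqrt_neg_mul hlam.le b
  have hσ : σ = -(2 / 3) * √(-lam) * b ^ 3 := by
    have hTtt (x : ℝ) : Ttt x = lam * b ^ 4 * (tanh (k * x) ^ 2 * (1 / cosh (k * x)) ^ 2) :=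
      mul_assoc _ _ _
    simp only [σ, hTtt, integral_const_mul_comp_mul_left _
      (fun y => tanh y ^ 2 * (1 / cosh y) ^ 2) hk, integral_tanh_sq_mul_sech_sq, k, hscale]
    ring
  have hτ : τ = (4 / 3) * √(-lam) * b ^ 3 := by
    simp only [τ, Tyy, integral_const_mul_comp_mul_left _ (fun y => (1 / cosh y) ^ 4) hk,
      integral_sech_pow_four, k, hscale]
    ring
  refine ⟨fun _ => rfl, fun _ => rfl, hσ, hτ, ?_⟩
  rw [hσ, hτ]
  nlinarith [mul_pos hs (pow_pos hb 3)]
end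

section
/- For 0 < ε < 1, the functions M^2(r̃) = (r̃^{1+ε} + C_1)/r̃^{1-ε} and N^2(r̃) = (1+ε) r̃^{1+ε}/(r̃^{1+ε} + C_1) solve the BPS-limit Einstein equations (2/r̃)(N'/N) + (N^2 - 1)/r̃^2 = ε/r̃^2 and (2/r̃)(M'/M) - (N^2 - 1)/r̃^2 = ε/r̃^2 on (0,∞) wherever r̃^{1+ε} + C_1 > 0. -/
/-!
Both equations only involve the logarithmic derivatives of `M² = (r^{1+ε} + C₁)/r^{1-ε}` and
`N² = (1+ε) r^{1+ε}/(r^{1+ε} + C₁)`, which split into those of the power and binomial factors: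
`r (N²)'/N² = (1+ε)(1 - r^{1+ε}/D)` and `r (M²)'/M² = (1+ε) r^{1+ε}/D - (1-ε)` with
`D = r^{1+ε} + C₁`. Adding `N² - 1 = (ε r^{1+ε} - C₁)/D`, resp. subtracting it, leaves `ε`.
-/

namespace Real

theorem logDeriv_rpow_const {x : ℝ} (hx : 0 < x) (p : ℝ) :
    logDeriv (fun z : ℝ => z ^ p) x = p / x := by
  rw [logDeriv_apply, deriv_rpow_const, rpow_sub_one hx.ne']
  field_simp

theorem logDeriv_rpow_const_add {x : ℝ} (hx : 0 < x) (p c : ℝ) :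
    logDeriv (fun z : ℝ => z ^ p + c) x = p * x ^ p / (x * (x ^ p + c)) := by
  rw [logDeriv_apply, deriv_add_const, deriv_rpow_const, rpow_sub_one hx.ne']
  field_simp

theorem logDeriv_const_mul_rpow_div_rpow_add {a p c x : ℝ} (ha : a ≠ 0) (hx : 0 < x)
    (hD : x ^ p + c ≠ 0) :
    logDeriv (fun z : ℝ => a * z ^ p / (z ^ p + c)) x = p / x - p * x ^ p / (x * (x ^ p + c)) := by
  have hdiff : DifferentiableAt ℝ (fun z : ℝ => z ^ p) x :=
    differentiableAt_id.rpow_const (Or.inl hx.ne')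
  rw [logDeriv_div x (by positivity) hD (hdiff.const_mul a) (hdiff.add_const c),
    logDeriv_const_mul x a ha, logDeriv_rpow_const hx, logDeriv_rpow_const_add hx]

theorem logDeriv_rpow_add_div_rpow {p q c x : ℝ} (hx : 0 < x) (hD : x ^ p + c ≠ 0) :
    logDeriv (fun z : ℝ => (z ^ p + c) / z ^ q) x = p * x ^ p / (x * (x ^ p + c)) - q / x := by
  have hdiff (s : ℝ) : DifferentiableAt ℝ (fun z : ℝ => z ^ s) x :=
    differentiableAt_id.rpow_const (Or.inl hx.ne')
  rw [logDeriv_div x hD (by positivity) ((hdiff p).add_const c) (hdiff q),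
    logDeriv_rpow_const_add hx, logDeriv_rpow_const hx]

end Real

theorem stmt_13_general (ε C₁ : ℝ) (hε0 : 0 < ε) :
    let m : ℝ → ℝ := fun r => (r ^ (1 + ε) + C₁) / r ^ (1 - ε)
    let n : ℝ → ℝ := fun r => (1 + ε) * r ^ (1 + ε) / (r ^ (1 + ε) + C₁)
    ∀ r : ℝ, 0 < r → 0 < r ^ (1 + ε) + C₁ →
      (1 / r) * (deriv n r / n r) + (n r - 1) / r ^ 2 = ε / r ^ 2 ∧
      (1 / r) * (deriv m r / m r) - (n r - 1) / r ^ 2 = ε / r ^ 2 := by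
  intro m n r hr hD
  have hn : deriv n r / n r = (1 + ε) / r - (1 + ε) * r ^ (1 + ε) / (r * (r ^ (1 + ε) + C₁)) :=
    Real.logDeriv_const_mul_rpow_div_rpow_add (by positivity) hr hD.ne'
  have hm : deriv m r / m r = (1 + ε) * r ^ (1 + ε) / (r * (r ^ (1 + ε) + C₁)) - (1 - ε) / r :=
    Real.logDeriv_rpow_add_div_rpow hr hD.ne'
  simp only [hn, hm, n]
  constructor <;> field_simp <;> ring

/-- For `0 < ε < 1`, `M²(r) = (r^{1+ε} + C₁)/r^{1-ε}` and
`N²(r) = (1+ε) r^{1+ε}/(r^{1+ε} + C₁)` solve the BPS-limit Einstein equations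
`(2/r)(N'/N) + (N² - 1)/r² = ε/r²` and `(2/r)(M'/M) - (N² - 1)/r² = ε/r²`
on `(0,∞)` wherever `r^{1+ε} + C₁ > 0`.  (With `m = M²`, `n = N²` one has
`2 M'/M = m'/m` and `2 N'/N = n'/n`.) -/
theorem stmt_13 (ε C₁ : ℝ) (hε0 : 0 < ε) (hε1 : ε < 1) :
    let m : ℝ → ℝ := fun r => (r ^ (1 + ε) + C₁) / r ^ (1 - ε)
    let n : ℝ → ℝ := fun r => (1 + ε) * r ^ (1 + ε) / (r ^ (1 + ε) + C₁)
    ∀ r : ℝ, 0 < r → 0 < r ^ (1 + ε) + C₁ →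
      (1 / r) * (deriv n r / n r) + (n r - 1) / r ^ 2 = ε / r ^ 2 ∧
      (1 / r) * (deriv m r / m r) - (n r - 1) / r ^ 2 = ε / r ^ 2 :=
  stmt_13_general ε C₁ hε0
end

section
/- The deflection integral for null geodesics in the metric with M^2 = r^{2ε}, N^2 = 1+ε evaluates to Δφ = 2∫_{r_m}^∞ √(1+ε) dr / (r^2 √(β^{-2} r^{-2ε} - r^{-2})) = π √(1+ε)/(1-ε), where r_m is the positive root of β^{-2} r^{-2ε} = r^{-2}; in particular Δφ is independent of β for ε ∈ (0,1). -/
/-!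
The root condition `β⁻² r_m^{-2ε} = r_m^{-2}` eliminates `β`: under the square root,
`β⁻² r^{-2ε} - r^{-2} = ((r/r_m)^a - 1) r^{-2}` with `a = 2 - 2ε > 0`, so the integrand becomes
`√(1+ε) / (r √((r/r_m)^a - 1))`. This has the explicit antiderivative
`(2/a) √(1+ε) arctan √((r/r_m)^a - 1)`, which vanishes at `r_m` and tends to `π/a · √(1+ε)`.
-/

open MeasureTheory Filter Real Set Topology

namespace Deflection

variable {a ρ : ℝ}

lemma one_lt_div_rpow (ha : 0 < a) (hρ : 0 < ρ) {r : ℝ} (hr : ρ < r) : 1 < (r / ρ) ^ a :=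
  Real.one_lt_rpow ((one_lt_div hρ).2 hr) ha

lemma hasDerivAt_arctan_sqrt_div_rpow_sub_one (ha : 0 < a) (hρ : 0 < ρ) {r : ℝ} (hr : ρ < r) :
    HasDerivAt (fun x => arctan √((x / ρ) ^ a - 1)) (a / 2 / (r * √((r / ρ) ^ a - 1))) r := by
  have hr0 : 0 < r := hρ.trans hr
  have hu : 0 < (r / ρ) ^ a - 1 := sub_pos.2 (one_lt_div_rpow ha hρ hr)
  have hpow : HasDerivAt (fun x => (x / ρ) ^ a - 1) (a * (r / ρ) ^ (a - 1) * (1 / ρ)) r := by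
    simpa using ((Real.hasDerivAt_rpow_const (p := a) (Or.inl (by positivity))).comp r
      ((hasDerivAt_id r).div_const ρ)).sub_const 1
  refine ((Real.hasDerivAt_arctan _).comp r (hpow.sqrt hu.ne')).congr_deriv ?_
  have hsqrt : 0 < √((r / ρ) ^ a - 1) := Real.sqrt_pos.2 hu
  rw [Real.sq_sqrt hu.le, add_sub_cancel, Real.rpow_sub_one (by positivity)]
  field_simp

lemma tendsto_arctan_sqrt_div_rpow_sub_one (ha : 0 < a) (hρ : 0 < ρ) :
    Tendsto (fun x => arctan √((x / ρ) ^ a - 1)) atTop (𝓝 (π / 2)) :=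
  (tendsto_nhds_of_tendsto_nhdsWithin Real.tendsto_arctan_atTop).comp <|
    Real.tendsto_sqrt_atTop.comp <| tendsto_atTop_add_const_right _ _ <|
      (tendsto_rpow_atTop ha).comp (tendsto_id.atTop_div_const hρ)

theorem integral_Ioi_one_div_mul_sqrt_div_rpow_sub_one (ha : 0 < a) (hρ : 0 < ρ) :
    ∫ r in Ioi ρ, 1 / (r * √((r / ρ) ^ a - 1)) = π / a := by
  have hcont : ContinuousWithinAt (fun x => 2 / a * arctan √((x / ρ) ^ a - 1)) (Ici ρ) ρ := by
    fun_prop (disch := positivity)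
  have hderiv : ∀ r ∈ Ioi ρ, HasDerivAt (fun x => 2 / a * arctan √((x / ρ) ^ a - 1))
      (1 / (r * √((r / ρ) ^ a - 1))) r := fun r hr =>
    ((hasDerivAt_arctan_sqrt_div_rpow_sub_one ha hρ hr).const_mul (2 / a)).congr_deriv
      (by field_simp)
  have hnonneg : ∀ r ∈ Ioi ρ, 0 ≤ 1 / (r * √((r / ρ) ^ a - 1)) := fun r hr =>
    have : 0 < r := hρ.trans hr
    by positivity
  rw [integral_Ioi_of_hasDerivAt_of_nonneg hcont hderiv hnonneg
    ((tendsto_arctan_sqrt_div_rpow_sub_one ha hρ).const_mul (2 / a))]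
  simp [div_self hρ.ne']

lemma mul_rpow_sub_rpow_of_mul_rpow_eq {k p q r : ℝ} (hρ : 0 < ρ) (hr : 0 < r)
    (hroot : k * ρ ^ p = ρ ^ q) :
    k * r ^ p - r ^ q = ((r / ρ) ^ (p - q) - 1) * r ^ q := by
  have hk : k = ρ ^ q / ρ ^ p := by rw [← hroot]; field_simp
  rw [hk, Real.div_rpow hr.le hρ.le, Real.rpow_sub hr, Real.rpow_sub hρ]
  field_simp

lemma sq_mul_sqrt_mul_rpow_neg_two {r : ℝ} (hr : 0 < r) (x : ℝ) :
    r ^ 2 * √(x * r ^ (-(2 : ℝ))) = r * √x := by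
  rw [Real.sqrt_mul' _ (by positivity), Real.rpow_neg hr.le, Real.rpow_two, Real.sqrt_inv,
    Real.sqrt_sq hr.le]
  field_simp

end Deflection

open Deflection in
theorem stmt_14_general (ε β rm : ℝ) (hε1 : ε < 1) (hrm : 0 < rm)
    (hroot : β⁻¹ ^ 2 * rm ^ (-(2 : ℝ) * ε) = rm ^ (-(2 : ℝ))) :
    2 * ∫ r in Set.Ioi rm,
        Real.sqrt (1 + ε) /
          (r ^ 2 * Real.sqrt (β⁻¹ ^ 2 * r ^ (-(2 : ℝ) * ε) - r ^ (-(2 : ℝ)))) =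
      Real.pi * Real.sqrt (1 + ε) / (1 - ε) := by
  have hexp : -(2 : ℝ) * ε - -2 = 2 * (1 - ε) := by ring
  have hintegrand : EqOn
      (fun r => √(1 + ε) / (r ^ 2 * √(β⁻¹ ^ 2 * r ^ (-(2 : ℝ) * ε) - r ^ (-(2 : ℝ)))))
      (fun r => √(1 + ε) * (1 / (r * √((r / rm) ^ (2 * (1 - ε)) - 1)))) (Ioi rm) := by
    intro r hr
    have hr0 : 0 < r := hrm.trans hr
    dsimp only
    rw [mul_rpow_sub_rpow_of_mul_rpow_eq hrm hr0 hroot, hexp, sq_mul_sqrt_mul_rpow_neg_two hr0,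
      mul_one_div]
  rw [setIntegral_congr_fun measurableSet_Ioi hintegrand, integral_const_mul,
    integral_Ioi_one_div_mul_sqrt_div_rpow_sub_one (by linarith) hrm]
  field_simp

/-- The deflection integral for null geodesics in the metric with
`M² = r^{2ε}`, `N² = 1+ε` evaluates to
`Δφ = 2∫_{r_m}^∞ √(1+ε) dr/(r²√(β⁻²r^{-2ε} - r^{-2})) = π√(1+ε)/(1-ε)`,
where `r_m > 0` is the root of `β⁻² r^{-2ε} = r^{-2}`; in particular `Δφ` is
independent of `β`. -/
theorem stmt_14 (ε β rm : ℝ) (hε0 : 0 < ε) (hε1 : ε < 1) (hβ : 0 < β) (hrm : 0 < rm)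
    (hroot : β⁻¹ ^ 2 * rm ^ (-(2 : ℝ) * ε) = rm ^ (-(2 : ℝ))) :
    2 * ∫ r in Set.Ioi rm,
        Real.sqrt (1 + ε) /
          (r ^ 2 * Real.sqrt (β⁻¹ ^ 2 * r ^ (-(2 : ℝ) * ε) - r ^ (-(2 : ℝ)))) =
      Real.pi * Real.sqrt (1 + ε) / (1 - ε) :=
  stmt_14_general ε β rm hε1 hrm hroot
end
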